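/- For all x, y > 0, the two real numbers z₊ = x + y + √(2·x·y) and z₋ = x + y − √(2·x·y) are distinct, both positive, and both satisfy x² + y² + z² − 2·x·z − 2·y·z = 0. Consequently the relation x² + y² + z² − 2xz − 2yz = 0 does not define z as a function of (x,y) on the positive quadrant. -/
import Mathlib


lemma cone_main : ∀ x y : ℝ, 0 < x → 0 < y →
      (x + y + Real.sqrt (2 * x * y)) ≠ (x + y - Real.sqrt (2 * x * y)) ∧
      0 < x + y + Real.sqrt (2 * x * y) ∧
      0 < x + y - Real.sqrt (2 * x * y) ∧
      x ^ 2 + y ^ 2 + (x + y + Real.sqrt (2 * x * y)) ^ 2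
        - 2 * x * (x + y + Real.sqrt (2 * x * y))
        - 2 * y * (x + y + Real.sqrt (2 * x * y)) = 0 ∧
      x ^ 2 + y ^ 2 + (x + y - Real.sqrt (2 * x * y)) ^ 2
        - 2 * x * (x + y - Real.sqrt (2 * x * y))
        - 2 * y * (x + y - Real.sqrt (2 * x * y)) = 0 := by
  intro x y hx hy
  have h2 : (0:ℝ) < 2 * x * y := by positivity
  have hs : 0 < Real.sqrt (2 * x * y) := Real.sqrt_pos.mpr h2
  have hsq : Real.sqrt (2 * x * y) ^ 2 = 2 * x * y := Real.sq_sqrt h2.le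
  have hlt : Real.sqrt (2 * x * y) < x + y := by
    rw [show x + y = Real.sqrt ((x+y)^2) from (Real.sqrt_sq (by linarith)).symm]
    exact Real.sqrt_lt_sqrt h2.le (by nlinarith [sq_nonneg (x - y)])
  refine ⟨by intro h; nlinarith, by positivity, by linarith, by nlinarith, by nlinarith⟩

/-- On the positive quadrant the tilted cone `x² + y² + z² − 2xz − 2yz = 0` carries two
distinct positive values of `z` over each `(x,y)`, hence does not define `z` as a
function of `(x,y)`. -/
theorem tilted_cone_not_a_function :
    (∀ x y : ℝ, 0 < x → 0 < y →
      (x + y + Real.sqrt (2 * x * y)) ≠ (x + y - Real.sqrt (2 * x * y)) ∧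
      0 < x + y + Real.sqrt (2 * x * y) ∧
      0 < x + y - Real.sqrt (2 * x * y) ∧
      x ^ 2 + y ^ 2 + (x + y + Real.sqrt (2 * x * y)) ^ 2
        - 2 * x * (x + y + Real.sqrt (2 * x * y))
        - 2 * y * (x + y + Real.sqrt (2 * x * y)) = 0 ∧
      x ^ 2 + y ^ 2 + (x + y - Real.sqrt (2 * x * y)) ^ 2
        - 2 * x * (x + y - Real.sqrt (2 * x * y))
        - 2 * y * (x + y - Real.sqrt (2 * x * y)) = 0) ∧
    ¬ ∃ f : ℝ × ℝ → ℝ, ∀ x y : ℝ, 0 < x → 0 < y → ∀ z : ℝ,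
      (x ^ 2 + y ^ 2 + z ^ 2 - 2 * x * z - 2 * y * z = 0 ↔ z = f (x, y)) := by
  refine ⟨cone_main, ?_⟩
  rintro ⟨f, hf⟩
  obtain ⟨hne, _, _, h1, h2⟩ := cone_main 1 1 one_pos one_pos
  have e1 := (hf 1 1 one_pos one_pos _).mp h1
  have e2 := (hf 1 1 one_pos one_pos _).mp h2
  exact hne (e1.trans e2.symm)
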